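/- Let $A$ be an integral domain with a generalized Euclidean function $\sigma$, and let $F \neq A$ be a factroid of $A$. Then there exists $n \in \sigma(A)$ such that $F = C_n := \{a \in A \mid \sigma(a) \leq n\}$, and $F$ is the factroid generated by any single element $x$ with $\sigma(x) = n$. -/
import Mathlib


/-- A factroid of the integral domain `A`: an additive subgroup `F` such that
`b * a ∈ F` with `b ≠ 0` implies `a ∈ F`. -/
def IsFactroid {A : Type*} [CommRing A] [IsDomain A] (F : Set A) : Prop :=
  (0 : A) ∈ F ∧ (∀ x ∈ F, ∀ y ∈ F, x + y ∈ F) ∧ (∀ x ∈ F, -x ∈ F) ∧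
    ∀ b a : A, b ≠ 0 → b * a ∈ F → a ∈ F

/-- Any factroid containing `x` contains every element of σ-value at most `σ x`. -/
private lemma aux_mem {A : Type*} [CommRing A] [IsDomain A] (σ : A → WithBot ℕ)
    (h0 : ∀ a : A, σ a = ⊥ ↔ a = 0)
    (hdiv : ∀ a b : A, b ≠ 0 → ∃ q r : A, a = b * q + r ∧ σ r < σ b)
    (G : Set A) (hG : IsFactroid G) (x : A) (hxG : x ∈ G) :
    ∀ b : A, σ b ≤ σ x → b ∈ G := by
  obtain ⟨hG0, hGadd, hGneg, hGdiv⟩ := hG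
  have hcoe : ∀ b : A, b ≠ 0 → ∃ m : ℕ, σ b = (m : WithBot ℕ) := by
    intro b hb
    obtain ⟨m, hm⟩ := WithBot.ne_bot_iff_exists.1 (fun h => hb ((h0 b).1 h))
    exact ⟨m, hm.symm⟩
  have key : ∀ n : ℕ, ∀ b : A, σ b < (n : WithBot ℕ) → σ b ≤ σ x → b ∈ G := by
    intro n
    induction n with
    | zero =>
      intro b hb _
      rcases eq_or_ne b 0 with h | h
      · rw [h]; exact hG0
      · obtain ⟨m, hm⟩ := hcoe b h
        rw [hm] at hb
        exact absurd (by exact_mod_cast hb : m < 0) (Nat.not_lt_zero m)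
    | succ n ih =>
      intro b hb hbx
      rcases eq_or_ne b 0 with h | h
      · rw [h]; exact hG0
      · obtain ⟨q, r, hqr, hr⟩ := hdiv x b h
        have hrx : σ r ≤ σ x := le_of_lt (lt_of_lt_of_le hr hbx)
        have hrn : σ r < (n : WithBot ℕ) := by
          obtain ⟨m, hm⟩ := hcoe b h
          rw [hm] at hb hr
          have hmn : m ≤ n := Nat.lt_succ_iff.1 (by exact_mod_cast hb)
          exact lt_of_lt_of_le hr (by exact_mod_cast hmn)
        have hrG := ih r hrn hrx
        have hbqG : b * q ∈ G := by
          have h1 : b * q = x + (-r) := by rw [hqr]; ring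
          rw [h1]; exact hGadd x hxG (-r) (hGneg r hrG)
        rcases eq_or_ne q 0 with hq | hq
        · exfalso
          rw [hq, mul_zero, zero_add] at hqr
          rw [← hqr] at hr
          exact absurd hbx (not_le.2 hr)
        · exact hGdiv q b hq (by rwa [mul_comm])
  intro b hbx
  rcases eq_or_ne b 0 with h | h
  · rw [h]; exact hG0
  · obtain ⟨m, hm⟩ := hcoe b h
    exact key (m + 1) b (by rw [hm]; exact_mod_cast Nat.lt_succ_self m) hbx

/-- Let `A` be an integral domain with a generalized Euclidean function `σ`, and let
`F ≠ A` be a factroid of `A`.  Then there is an `n` in the image of `σ` such that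
for every `x` with `σ x = n` one has `F = C_n = {a | σ a ≤ n}`, which is also the
factroid generated by `x`. -/
theorem stmt_17 {A : Type*} [CommRing A] [IsDomain A] (σ : A → WithBot ℕ)
    (h0 : ∀ a : A, σ a = ⊥ ↔ a = 0)
    (hdiv : ∀ a b : A, b ≠ 0 → ∃ q r : A, a = b * q + r ∧ σ r < σ b)
    (F : Set A) (hF : IsFactroid F) (hFne : F ≠ Set.univ) :
    ∃ a₀ : A, ∀ x : A, σ x = σ a₀ →
      F = {a : A | σ a ≤ σ a₀} ∧
      F = ⋂₀ {G : Set A | IsFactroid G ∧ x ∈ G} := by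
  classical
  obtain ⟨hF0, hFadd, hFneg, hFdiv⟩ := hF
  have hcoe : ∀ b : A, b ≠ 0 → ∃ m : ℕ, σ b = (m : WithBot ℕ) := by
    intro b hb
    obtain ⟨m, hm⟩ := WithBot.ne_bot_iff_exists.1 (fun h => hb ((h0 b).1 h))
    exact ⟨m, hm.symm⟩
  -- complement is nonempty, pick c ∉ F with minimal natural σ-value k
  have hk : ∃ k : ℕ, ∃ c : A, c ∉ F ∧ σ c = (k : WithBot ℕ) := by
    have hc : ∃ c, c ∉ F := by
      by_contra h
      push_neg at h
      exact hFne (Set.eq_univ_of_forall h)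
    obtain ⟨c, hc⟩ := hc
    have hc0 : c ≠ 0 := fun h => hc (h ▸ hF0)
    obtain ⟨m, hm⟩ := hcoe c hc0
    exact ⟨m, c, hc, hm⟩
  set k := Nat.find hk with hkdef
  obtain ⟨c, hcF, hck⟩ := Nat.find_spec hk
  -- minimality: everything of σ-value below k is in F
  have hmin : ∀ d : A, σ d < (k : WithBot ℕ) → d ∈ F := by
    intro d hd
    by_contra hdF
    rcases eq_or_ne d 0 with h | h
    · exact hdF (h ▸ hF0)
    · obtain ⟨m, hm⟩ := hcoe d h
      rw [hm] at hd
      have hmk : m < k := by exact_mod_cast hd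
      exact Nat.find_min hk hmk ⟨d, hdF, hm⟩
  have hc0 : c ≠ 0 := by
    intro h
    rw [h, (h0 0).2 rfl] at hck
    exact WithBot.bot_ne_coe hck
  -- F is exactly the set of elements of σ-value < k
  have hFeq : ∀ a : A, a ∈ F ↔ σ a < (k : WithBot ℕ) := by
    intro a
    constructor
    · intro ha
      by_contra hlt
      push_neg at hlt
      obtain ⟨q, r, hqr, hr⟩ := hdiv a c hc0
      rw [hck] at hr
      have hrF : r ∈ F := hmin r hr
      have hcq : c * q ∈ F := by
        have h2 : c * q = a + (-r) := by rw [hqr]; ring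
        rw [h2]; exact hFadd a ha (-r) (hFneg r hrF)
      rcases eq_or_ne q 0 with hq | hq
      · rw [hq, mul_zero, zero_add] at hqr
        rw [← hqr] at hr
        exact absurd hlt (not_le.2 hr)
      · exact hcF (hFdiv q c hq (by rwa [mul_comm]))
    · exact hmin a
  -- choose a₀ ∈ F with maximal σ-value
  obtain ⟨a₀, ha₀F, hmax⟩ : ∃ a₀ ∈ F, ∀ a ∈ F, σ a ≤ σ a₀ := by
    by_cases hzero : ∀ a ∈ F, a = 0
    · refine ⟨0, hF0, fun a ha => ?_⟩
      rw [hzero a ha]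
    · push_neg at hzero
      obtain ⟨a₁, ha₁F, ha₁0⟩ := hzero
      obtain ⟨m₁, hm₁⟩ := hcoe a₁ ha₁0
      have hm₁k : m₁ < k := by
        have := (hFeq a₁).1 ha₁F
        rw [hm₁] at this
        exact_mod_cast this
      set S := (Finset.range k).filter (fun m : ℕ => ∃ a ∈ F, σ a = ((m : ℕ) : WithBot ℕ)) with hS
      have hSne : S.Nonempty :=
        ⟨m₁, Finset.mem_filter.2 ⟨Finset.mem_range.2 hm₁k, a₁, ha₁F, hm₁⟩⟩
      obtain ⟨-, a₀, ha₀F, ha₀σ⟩ := Finset.mem_filter.1 (S.max'_mem hSne)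
      refine ⟨a₀, ha₀F, fun a ha => ?_⟩
      rcases eq_or_ne a 0 with h | h
      · rw [(h0 a).2 h]; exact bot_le
      · obtain ⟨m, hm⟩ := hcoe a h
        have hmk : m < k := by
          have := (hFeq a).1 ha
          rw [hm] at this
          exact_mod_cast this
        have hmS : m ∈ S := Finset.mem_filter.2 ⟨Finset.mem_range.2 hmk, a, ha, hm⟩
        have hle := S.le_max' m hmS
        rw [ha₀σ, hm]
        exact_mod_cast hle
  refine ⟨a₀, fun x hx => ?_⟩
  have hCn : F = {a : A | σ a ≤ σ a₀} := by
    ext a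
    simp only [Set.mem_setOf_eq]
    constructor
    · exact hmax a
    · intro h
      exact (hFeq a).2 (lt_of_le_of_lt h ((hFeq a₀).1 ha₀F))
  have hxF : x ∈ F := by
    rw [hCn]
    exact le_of_eq hx
  refine ⟨hCn, Set.Subset.antisymm ?_ ?_⟩
  · intro a haF G hG
    obtain ⟨hGfac, hxG⟩ := hG
    exact aux_mem σ h0 hdiv G hGfac x hxG a (hx ▸ hmax a haF)
  · intro a ha
    exact ha F ⟨⟨hF0, hFadd, hFneg, hFdiv⟩, hxF⟩
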